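/- Let V₁ : [t₀,∞) → ℝ be differentiable and nonnegative with V₁'(t) = g(t) − μ·S(t) where g(t) ≤ B + α·I(t), 0 ≤ I(t) ≤ B/μ for all t, and I(t) < ε for all t > K₁. Then limsup_{t→∞} (1/t)∫_{t₀}^t S(ξ)dξ ≤ B/μ + (α/μ)·ε. -/

import Mathlib

/-!
Integrating `V₁' = g - μ S ≤ B + α I - μ S` and using `V₁ ≥ 0` gives
`μ ∫_{t₀}^t S ≤ V₁ t₀ + B (t - t₀) + α ∫_{t₀}^t I`. Bounding `I` by `B / μ` up to `K₁` and by `ε`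
afterwards makes the right-hand side affine in `t` with slope `B + α ε`, so the running average of
`S` has limsup at most `(B + α ε) / μ`.
-/

open Set Filter Topology intervalIntegral

lemma integral_le_of_le_piecewise_const {f : ℝ → ℝ} {a K t M ε : ℝ} (haK : a ≤ K) (hKt : K ≤ t)
    (hf : ContinuousOn f (Ici a)) (hM : ∀ x ∈ Ioo a K, f x ≤ M) (hε : ∀ x ∈ Ioo K t, f x ≤ ε) :
    ∫ x in a..t, f x ≤ M * (K - a) + ε * (t - K) := by
  have hint : ∀ {b c}, a ≤ b → b ≤ c → IntervalIntegrable f MeasureTheory.volume b c :=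
    fun hab hbc => (hf.mono fun x hx => hab.trans (uIcc_of_le hbc ▸ hx).1).intervalIntegrable
  have h₁ : ∫ x in a..K, f x ≤ ∫ _ in a..K, M :=
    integral_mono_on_of_le_Ioo haK (hint le_rfl haK) intervalIntegrable_const hM
  have h₂ : ∫ x in K..t, f x ≤ ∫ _ in K..t, ε :=
    integral_mono_on_of_le_Ioo hKt (hint haK hKt) intervalIntegrable_const hε
  rw [← integral_add_adjacent_intervals (hint le_rfl haK) (hint haK hKt)]
  simp only [integral_const, smul_eq_mul] at h₁ h₂
  linarith

lemma limsup_inv_mul_le_of_le_affine {F : ℝ → ℝ} {C L : ℝ} (hF₀ : ∀ᶠ t in atTop, 0 ≤ F t)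
    (hF : ∀ᶠ t in atTop, F t ≤ C + L * t) :
    limsup (fun t => 1 / t * F t) atTop ≤ L := by
  have hlim : Tendsto (fun t : ℝ => C / t + L) atTop (𝓝 L) := by
    simpa using (tendsto_const_nhds.div_atTop tendsto_id).add (tendsto_const_nhds (x := L))
  have hle : (fun t => 1 / t * F t) ≤ᶠ[atTop] fun t => C / t + L := by
    filter_upwards [hF, eventually_gt_atTop 0] with t ht htpos
    rw [div_add' _ _ _ htpos.ne', one_div, inv_mul_le_iff₀ htpos, mul_div_cancel₀ _ htpos.ne']
    linarith
  have hcobdd : IsCoboundedUnder (· ≤ ·) atTop fun t => 1 / t * F t := by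
    refine isCoboundedUnder_le_of_eventually_le atTop (x := 0) ?_
    filter_upwards [hF₀, eventually_gt_atTop 0] with t ht htpos
    positivity
  exact (limsup_le_limsup hle hcobdd hlim.isBoundedUnder_le).trans hlim.limsup_eq.le

lemma mul_integral_le_of_deriv_eq {B μ α t₀ t : ℝ} (ht : t₀ ≤ t) {S I g V : ℝ → ℝ}
    (hS : ContinuousOn S (Ici t₀)) (hI : ContinuousOn I (Ici t₀))
    (hV : Differentiable ℝ V) (hV₀ : 0 ≤ V t)
    (hV' : ∀ s ≥ t₀, deriv V s = g s - μ * S s) (hg : ∀ s ≥ t₀, g s ≤ B + α * I s) :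
    μ * ∫ ξ in t₀..t, S ξ ≤ V t₀ + B * (t - t₀) + α * ∫ ξ in t₀..t, I ξ := by
  have hSint : IntervalIntegrable S MeasureTheory.volume t₀ t :=
    (hS.mono (uIcc_of_le ht ▸ Icc_subset_Ici_self)).intervalIntegrable
  have hIint : IntervalIntegrable I MeasureTheory.volume t₀ t :=
    (hI.mono (uIcc_of_le ht ▸ Icc_subset_Ici_self)).intervalIntegrable
  have hrhs : ContinuousOn (fun s => B + α * I s - μ * S s) (Icc t₀ t) :=
    ((continuousOn_const.add (continuousOn_const.mul hI)).sub
      (continuousOn_const.mul hS)).mono Icc_subset_Ici_self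
  have hFTC : V t - V t₀ ≤ ∫ s in t₀..t, (B + α * I s - μ * S s) :=
    sub_le_integral_of_hasDeriv_right_of_le ht hV.continuous.continuousOn
      (fun x _ => (hV x).hasDerivAt.hasDerivWithinAt)
      (hrhs.integrableOn_compact isCompact_Icc)
      (fun x hx => by rw [hV' x hx.1.le]; linarith [hg x hx.1.le])
  rw [integral_sub (intervalIntegrable_const.add (hIint.const_mul α)) (hSint.const_mul μ),
    integral_add intervalIntegrable_const (hIint.const_mul α), integral_const, integral_const_mul,
    integral_const_mul, smul_eq_mul] at hFTC
  linarith

theorem stmt_12_general (B μ α ε K₁ t₀ : ℝ)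
    (hμ : 0 < μ) (hα : 0 < α) (hK₁ : t₀ ≤ K₁)
    (S I g : ℝ → ℝ)
    (hScont : ContinuousOn S (Set.Ici t₀)) (hSnn : ∀ t ≥ t₀, 0 ≤ S t)
    (hIcont : ContinuousOn I (Set.Ici t₀))
    (hIbd : ∀ t ≥ t₀, 0 ≤ I t ∧ I t ≤ B / μ)
    (hIε : ∀ t > K₁, I t < ε)
    (V₁ : ℝ → ℝ) (hV₁ : Differentiable ℝ V₁) (hV₁nn : ∀ t ≥ t₀, 0 ≤ V₁ t)
    (hV₁' : ∀ t ≥ t₀, deriv V₁ t = g t - μ * S t)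
    (hg : ∀ t ≥ t₀, g t ≤ B + α * I t) :
    Filter.limsup (fun t => (1 / t) * ∫ ξ in t₀..t, S ξ) Filter.atTop
      ≤ B / μ + (α / μ) * ε := by
  set C := (V₁ t₀ - B * t₀ + α * (B / μ * (K₁ - t₀) - ε * K₁)) / μ
  refine limsup_inv_mul_le_of_le_affine (C := C) ?_ ?_
  · filter_upwards [eventually_ge_atTop t₀] with t ht
    exact integral_nonneg ht fun s hs => hSnn s hs.1
  · filter_upwards [eventually_ge_atTop K₁] with t ht
    have hS := mul_integral_le_of_deriv_eq (hK₁.trans ht) hScont hIcont hV₁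
      (hV₁nn t (hK₁.trans ht)) hV₁' hg
    have hI := integral_le_of_le_piecewise_const hK₁ ht hIcont
      (fun x hx => (hIbd x hx.1.le).2) (fun x hx => (hIε x hx.1).le)
    have hmul : μ * (C + (B / μ + α / μ * ε) * t)
        = V₁ t₀ + B * (t - t₀) + α * (B / μ * (K₁ - t₀) + ε * (t - K₁)) := by
      simp only [C]; field_simp; ring
    refine le_of_mul_le_mul_left ?_ hμ
    rw [hmul]
    linarith [mul_le_mul_of_nonneg_left hI hα.le]

theorem stmt_12 (B μ α ε K₁ t₀ : ℝ)
    (hB : 0 < B) (hμ : 0 < μ) (hα : 0 < α) (hε : 0 < ε) (hK₁ : t₀ ≤ K₁)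
    (S I g : ℝ → ℝ)
    (hScont : ContinuousOn S (Set.Ici t₀)) (hSnn : ∀ t ≥ t₀, 0 ≤ S t)
    (hIcont : ContinuousOn I (Set.Ici t₀))
    (hIbd : ∀ t ≥ t₀, 0 ≤ I t ∧ I t ≤ B / μ)
    (hIε : ∀ t > K₁, I t < ε)
    (V₁ : ℝ → ℝ) (hV₁ : Differentiable ℝ V₁) (hV₁nn : ∀ t ≥ t₀, 0 ≤ V₁ t)
    (hV₁' : ∀ t ≥ t₀, deriv V₁ t = g t - μ * S t)
    (hg : ∀ t ≥ t₀, g t ≤ B + α * I t) :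
    Filter.limsup (fun t => (1 / t) * ∫ ξ in t₀..t, S ξ) Filter.atTop
      ≤ B / μ + (α / μ) * ε :=
  stmt_12_general B μ α ε K₁ t₀ hμ hα hK₁ S I g hScont hSnn hIcont hIbd hIε V₁ hV₁ hV₁nn hV₁' hg
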